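/- There exist a finite alphabet A and a quasi-regular (hence weakly regular) 3-variable language L over A such that the 2-variable language {(v, w) in (A*)^2 : for all u in A*, (u, v, w) in L} is not weakly regular. In particular, universal quantification over a coordinate does not preserve weak regularity. -/

import Mathlib

/-- An `n`-tape semi-sorted (deterministic) asynchronous automaton over `A`:
a partial deterministic finite state automaton over `A ∪ {$}` (unique start state,
no `ε`-transitions, at most one transition from each state for each letter; the
padding symbol `$` is modelled by `none : Option A`), together with a partition of
its states into `n` sets (recorded by `tape`, where `tape s = i` means `s ∈ S_i`). -/
structure SemiSortedAA (A : Type) (n : ℕ) where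
  State : Type
  fintype : Fintype State
  start : State
  accept : Set State
  /-- partial deterministic transition function over the alphabet `A ∪ {$}` -/
  step : State → Option A → Option State
  /-- the index `i` such that the state lies in `S_i` -/
  tape : State → Fin n

namespace SemiSortedAA

variable {A : Type} {n : ℕ}

/-- `M.Run s r f` : starting in state `s` with remaining (still unread) content `r i`
on the `i`-th tape, the automaton can consume all the remaining content and end in
state `f`, where from a state `s` it reads the next letter of tape `M.tape s`.
This is exactly the existence of a shuffle of the tape contents labelling a path
from `s` to `f` in which every letter originating from the `i`-th tape is read
while the automaton is in a state of `S_i`. -/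
inductive Run (M : SemiSortedAA A n) :
    M.State → (Fin n → List (Option A)) → M.State → Prop
  | nil (s : M.State) : Run M s (fun _ => []) s
  | step {s t f : M.State} {c : Option A} {rest : List (Option A)}
      {r : Fin n → List (Option A)}
      (h : M.step s c = some t)
      (hr : r (M.tape s) = c :: rest)
      (hrun : Run M t (Function.update r (M.tape s) rest) f) :
      Run M s r f

/-- `M` accepts the tuple of words `(w 1, …, w n)` if some shuffle of
`(w 1 $, …, w n $)` labels a path from the start state to an accept state,
each letter from the `i`-th word (including its terminal `$`) being read in `S_i`. -/
def Accepts (M : SemiSortedAA A n) (w : Fin n → List A) : Prop :=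
  ∃ f ∈ M.accept, M.Run M.start (fun i => (w i).map some ++ [none]) f

end SemiSortedAA

/-- An `n`-variable language is quasi-regular if it is the language accepted by some
`n`-tape semi-sorted asynchronous automaton. -/
def IsQuasiRegular {A : Type} {n : ℕ} (L : Set (Fin n → List A)) : Prop :=
  ∃ M : SemiSortedAA A n, ∀ w, w ∈ L ↔ M.Accepts w

/-- An `n`-tape non-deterministic semi-sorted asynchronous automaton (SAA) over `A`:
a non-deterministic finite state automaton over `A ∪ {$}` (possibly with
`ε`-transitions and several start states; the padding symbol `$` is modelled by
`none : Option A`) together with a partition of its state set into `n` sets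
(recorded by `tape`, where `tape s = i` means `s ∈ S_i`). -/
structure SAA (A : Type) (n : ℕ) where
  State : Type
  fintype : Fintype State
  start : Set State
  accept : Set State
  /-- non-deterministic transitions labelled by letters of `A ∪ {$}` -/
  step : State → Option A → Set State
  /-- `ε`-transitions -/
  eps : State → Set State
  /-- the index `i` such that the state lies in `S_i` -/
  tape : State → Fin n

namespace SAA

variable {A : Type} {n : ℕ}

/-- Runs of a non-deterministic semi-sorted asynchronous automaton: `M.Run s r f`
means that starting at `s` with remaining content `r i` on the `i`-th tape, the
automaton can consume all the remaining content and end at `f`, reading from tape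
`M.tape s` when in state `s` (this is the existence of an appropriate shuffle). -/
inductive Run (M : SAA A n) :
    M.State → (Fin n → List (Option A)) → M.State → Prop
  | nil (s : M.State) : Run M s (fun _ => []) s
  | eps {s t f : M.State} {r : Fin n → List (Option A)}
      (h : t ∈ M.eps s) (hrun : Run M t r f) : Run M s r f
  | step {s t f : M.State} {c : Option A} {rest : List (Option A)}
      {r : Fin n → List (Option A)}
      (h : t ∈ M.step s c)
      (hr : r (M.tape s) = c :: rest)
      (hrun : Run M t (Function.update r (M.tape s) rest) f) :
      Run M s r f

/-- The SAA accepts `(w 1, …, w n)` if some shuffle of `(w 1 $, …, w n $)` labels a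
path from a start state to an accept state, each letter from the `i`-th word being
read while the automaton is in a state of `S_i`. -/
def Accepts (M : SAA A n) (w : Fin n → List A) : Prop :=
  ∃ s₀ ∈ M.start, ∃ f ∈ M.accept,
    M.Run s₀ (fun i => (w i).map some ++ [none]) f

end SAA

/-- An `n`-variable language is weakly regular if it is the language accepted by some
`n`-tape non-deterministic semi-sorted asynchronous automaton. -/
def IsWeaklyRegular {A : Type} {n : ℕ} (L : Set (Fin n → List A)) : Prop :=
  ∃ M : SAA A n, ∀ w, w ∈ L ↔ M.Accepts w

/-!
Write `1`, `0` for `true`, `false`. `headCountLang` accepts `(u, v, w)` when `w = 1^k`, where `k`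
counts the occurrences in `v` of the first letter of `u` (no condition when `u` is empty). A
deterministic semi-sorted automaton reads the first letter `b` of `u`, skips the rest of `u`, then
scans `v` and consumes one letter `1` of `w` for each `b` it meets. Quantifying over `u` turns this
into `|v|₁ = |v|₀ = |w|` with `w ∈ 1*`, which no SAA can check: the interleavings read along the
accepting runs of an SAA form a regular language over `Fin n × Option A`, so the pumping lemma
applied to `(1^K 0^K, 1^K)` deletes a nonempty set of leading `1`s from the two tapes and destroys
the balance.
-/

namespace SemiSortedAA

variable {A : Type} {n : ℕ} {M : SemiSortedAA A n} {s t f : M.State} {c : Option A}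
  {rest : List (Option A)} {r : Fin n → List (Option A)}

theorem run_iff_of_step_eq_some (hr : r (M.tape s) = c :: rest) (ht : M.step s c = some t) :
    M.Run s r f ↔ M.Run t (Function.update r (M.tape s) rest) f := by
  refine ⟨fun h => ?_, .step ht hr⟩
  cases h with
  | nil => simp at hr
  | step ht' hr' hrun =>
    rw [hr, List.cons.injEq] at hr'
    obtain ⟨rfl, rfl⟩ := hr'
    rw [ht, Option.some.injEq] at ht'
    exact ht' ▸ hrun

theorem not_run_of_step_eq_none (hr : r (M.tape s) = c :: rest) (ht : M.step s c = none) :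
    ¬ M.Run s r f := by
  intro h
  cases h with
  | nil => simp at hr
  | step ht' hr' =>
    rw [hr, List.cons.injEq] at hr'
    rw [← hr'.1, ht] at ht'
    cases ht'

def toSAA (M : SemiSortedAA A n) : SAA A n where
  State := M.State
  fintype := M.fintype
  start := {M.start}
  accept := M.accept
  step s c := {t | M.step s c = some t}
  eps _ := ∅
  tape := M.tape

theorem run_toSAA_iff : M.toSAA.Run s r f ↔ M.Run s r f := by
  constructor
  · exact fun h => SAA.Run.rec (M := M.toSAA) (motive := fun s r f _ => M.Run s r f)
      (fun s => .nil s) (fun h _ _ => absurd h (Set.notMem_empty _))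
      (fun h hr _ ih => .step h hr ih) h
  · intro h
    induction h with
    | nil s => exact .nil (M := M.toSAA) s
    | step h hr _ ih => exact .step (M := M.toSAA) h hr ih

theorem accepts_toSAA_iff {w : Fin n → List A} : M.toSAA.Accepts w ↔ M.Accepts w := by
  constructor
  · rintro ⟨_, rfl, f, hf, h⟩
    exact ⟨f, hf, run_toSAA_iff.1 h⟩
  · rintro ⟨f, hf, h⟩
    exact ⟨M.start, rfl, f, hf, run_toSAA_iff.2 h⟩

end SemiSortedAA

theorem IsQuasiRegular.isWeaklyRegular {A : Type} {n : ℕ} {L : Set (Fin n → List A)}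
    (hL : IsQuasiRegular L) : IsWeaklyRegular L :=
  let ⟨M, hM⟩ := hL
  ⟨M.toSAA, fun w => (hM w).trans SemiSortedAA.accepts_toSAA_iff.symm⟩

section TapeContents

variable {A : Type} {n : ℕ}

def tapeContents (l : List (Fin n × Option A)) (i : Fin n) : List (Option A) :=
  l.filterMap fun p => if p.1 = i then some p.2 else none

theorem tapeContents_cons (i : Fin n) (c : Option A) (l : List (Fin n × Option A)) :
    tapeContents ((i, c) :: l) = Function.update (tapeContents l) i (c :: tapeContents l i) := by
  funext j
  rcases eq_or_ne j i with rfl | hj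
  · simp [tapeContents]
  · simp [tapeContents, hj, Ne.symm hj]

theorem tapeContents_append (l₁ l₂ : List (Fin n × Option A)) (i : Fin n) :
    tapeContents (l₁ ++ l₂) i = tapeContents l₁ i ++ tapeContents l₂ i :=
  List.filterMap_append

theorem length_tapeContents_le (l : List (Fin n × Option A)) (i : Fin n) :
    (tapeContents l i).length ≤ l.length :=
  List.length_filterMap_le _ _

theorem tapeContents_cons_fst_ne_nil {p : Fin n × Option A} {l : List (Fin n × Option A)} :
    tapeContents (p :: l) p.1 ≠ [] := by
  simp [tapeContents]

theorem List.exists_eq_append_of_append_eq_map_some_append {x y : List (Option A)} {w : List A}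
    (h : x ++ y = w.map some ++ [none]) (hx : x.length ≤ w.length) :
    ∃ u v, w = u ++ v ∧ x = u.map some ∧ y = v.map some ++ [none] := by
  have hsplit : x ++ y = (w.take x.length).map some ++ ((w.drop x.length).map some ++ [none]) := by
    rw [h, ← List.append_assoc, ← List.map_append, List.take_append_drop]
  obtain ⟨hx', hy'⟩ := List.append_inj hsplit (by simp [hx])
  exact ⟨_, _, (List.take_append_drop _ w).symm, hx', hy'⟩

theorem exists_split_of_tapeContents_eq {a b c : List (Fin n × Option A)} {w : Fin n → List A}
    (h : tapeContents (a ++ b ++ c) = fun i => (w i).map some ++ [none]) (i : Fin n)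
    (hab : (a ++ b).length ≤ (w i).length) :
    ∃ α β γ, w i = α ++ β ++ γ ∧ tapeContents a i = α.map some ∧
      tapeContents b i = β.map some ∧ tapeContents c i = γ.map some ++ [none] := by
  have hi : (tapeContents a i ++ tapeContents b i) ++ tapeContents c i =
      (w i).map some ++ [none] := by
    rw [← tapeContents_append, ← tapeContents_append, h]
  have hlen : (tapeContents a i ++ tapeContents b i).length ≤ (w i).length := by
    rw [← tapeContents_append]
    exact (length_tapeContents_le _ i).trans hab
  obtain ⟨u, γ, hwi, hu, hγ⟩ := List.exists_eq_append_of_append_eq_map_some_append hi hlen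
  obtain ⟨α, β, rfl, hα, hβ⟩ := List.map_eq_append_iff.1 hu.symm
  exact ⟨α, β, γ, hwi, hα.symm, hβ.symm, hγ⟩

end TapeContents

namespace SAA

variable {A : Type} {n : ℕ} (M : SAA A n)

/-- The εNFA reading the interleavings of the runs of `M`. Its own `none` labels the ε-moves of
`M`, while the padding symbol `$` of tape `i` is the letter `(i, none)`. -/
def toεNFA : εNFA (Fin n × Option A) M.State where
  step s
    | none => M.eps s
    | some (i, c) => {t | i = M.tape s ∧ t ∈ M.step s c}
  start := M.start
  accept := M.accept

variable {M}

theorem run_iff_exists_isPath {s f : M.State} {r : Fin n → List (Option A)} :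
    M.Run s r f ↔ ∃ x, M.toεNFA.IsPath s f x ∧ tapeContents x.reduceOption = r := by
  constructor
  · intro h
    induction h with
    | nil s => exact ⟨[], .nil s, rfl⟩
    | eps h _ ih =>
      obtain ⟨x, hx, rfl⟩ := ih
      exact ⟨none :: x, .cons _ _ _ none x h hx, by simp⟩
    | @step s t f c rest r h hr _ ih =>
      obtain ⟨x, hx, hxr⟩ := ih
      refine ⟨some (M.tape s, c) :: x, .cons _ _ _ _ x ⟨rfl, h⟩ hx, ?_⟩
      rw [List.reduceOption_cons_of_some, tapeContents_cons, hxr, Function.update_idem,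
        Function.update_self, ← hr, Function.update_eq_self]
  · rintro ⟨x, hx, rfl⟩
    induction hx with
    | nil s => exact .nil s
    | cons t s u a x ht _ ih =>
      rcases a with _ | ⟨i, c⟩
      · exact .eps ht (by simpa using ih)
      · obtain ⟨rfl, ht⟩ := ht
        rw [List.reduceOption_cons_of_some, tapeContents_cons]
        exact .step (rest := tapeContents x.reduceOption (M.tape s)) ht
          (Function.update_self ..) (by rwa [Function.update_idem, Function.update_eq_self])

theorem accepts_iff_exists_mem_accepts {w : Fin n → List A} :
    M.Accepts w ↔
      ∃ l ∈ M.toεNFA.accepts, tapeContents l = fun i => (w i).map some ++ [none] := by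
  simp only [Accepts, εNFA.mem_accepts_iff_exists_path, run_iff_exists_isPath]
  constructor
  · rintro ⟨s₀, hs₀, f, hf, x, hx, hxw⟩
    exact ⟨_, ⟨s₀, f, x, hs₀, hf, rfl, hx⟩, hxw⟩
  · rintro ⟨_, ⟨s₀, f, x, hs₀, hf, rfl, hx⟩, hxw⟩
    exact ⟨s₀, hs₀, f, hf, x, hx, hxw⟩

end SAA

theorem IsWeaklyRegular.exists_pump_down {A : Type} {n : ℕ} [NeZero n]
    {L : Set (Fin n → List A)} (hL : IsWeaklyRegular L) :
    ∃ K, ∀ w ∈ L, (∀ i, K ≤ (w i).length) →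
      ∃ α β γ : Fin n → List A, (∀ i, w i = α i ++ β i ++ γ i) ∧
        (∀ i, (α i ++ β i).length ≤ K) ∧ (∃ i, β i ≠ []) ∧ (fun i => α i ++ γ i) ∈ L := by
  obtain ⟨M, hM⟩ := hL
  let := M.fintype
  refine ⟨Fintype.card (Set M.State), fun w hw hlen => ?_⟩
  obtain ⟨l, hl, hlw⟩ := SAA.accepts_iff_exists_mem_accepts.1 ((hM w).1 hw)
  have hK : Fintype.card (Set M.State) ≤ l.length := by
    have h0 := length_tapeContents_le l 0
    simp only [hlw, List.length_append, List.length_map, List.length_singleton] at h0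
    exact (hlen 0).trans (by omega)
  obtain ⟨a, b, c, rfl, hab, hb, hpump⟩ := M.toεNFA.pumping_lemma hl hK
  have hac : a ++ c ∈ M.toεNFA.accepts :=
    hpump ⟨a ++ [], ⟨a, rfl, [], Language.nil_mem_kstar _, rfl⟩, c, rfl, by simp⟩
  -- `a ++ b` is no longer than any tape, so it reads no `$`
  choose α β γ hw hα hβ hγ using fun i => exists_split_of_tapeContents_eq hlw i
    (by simpa using hab.trans (hlen i))
  refine ⟨α, β, γ, hw, fun i => ?_, ?_, (hM _).2 (SAA.accepts_iff_exists_mem_accepts.2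
    ⟨a ++ c, hac, funext fun i => by simp [tapeContents_append, hα, hγ]⟩)⟩
  · have := length_tapeContents_le (a ++ b) i
    simp only [tapeContents_append, hα, hβ, List.length_append, List.length_map] at this ⊢
    omega
  · obtain ⟨p, b', rfl⟩ := List.exists_cons_of_ne_nil hb
    exact ⟨p.1, fun hβp => tapeContents_cons_fst_ne_nil (by rw [hβ, hβp, List.map_nil])⟩

section Vec3

variable {α : Type*} (x y z a : α)

@[simp] theorem Matrix.update_vec3_zero : Function.update ![x, y, z] 0 a = ![a, y, z] := by
  funext i; fin_cases i <;> rfl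

@[simp] theorem Matrix.update_vec3_one : Function.update ![x, y, z] 1 a = ![x, a, z] := by
  funext i; fin_cases i <;> rfl

@[simp] theorem Matrix.update_vec3_two : Function.update ![x, y, z] 2 a = ![x, y, a] := by
  funext i; fin_cases i <;> rfl

end Vec3

inductive HeadCountState
  | start
  | skip (b : Bool)
  | count (b : Bool)
  | check (b : Bool)
  | close (b : Bool)
  | free₁
  | free₂
  | done
  deriving Fintype

namespace HeadCountState

def step : HeadCountState → Option Bool → Option HeadCountState
  | start, some b => skip b
  | start, none => free₁
  | skip b, some _ => skip b
  | skip b, none => count b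
  | count b, some a => if a = b then check b else count b
  | count b, none => close b
  | check b, some true => count b
  | close _, none => done
  | free₁, some _ => free₁
  | free₁, none => free₂
  | free₂, some _ => free₂
  | free₂, none => done
  | _, _ => none

def tape : HeadCountState → Fin 3
  | start | skip _ | done => 0
  | count _ | free₁ => 1
  | check _ | close _ | free₂ => 2

end HeadCountState

-- reducible, so that `simp` evaluates `headCount.tape` and `headCount.step` on constructors
abbrev headCount : SemiSortedAA Bool 3 where
  State := HeadCountState
  fintype := inferInstance
  start := .start
  accept := {.done}
  step := HeadCountState.step
  tape := HeadCountState.tape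

def headCountLang : Set (Fin 3 → List Bool) :=
  {t | ∀ b ∈ (t 0).head?, t 2 = List.replicate ((t 1).count b) true}

namespace headCount

open SemiSortedAA

attribute [local simp] HeadCountState.tape HeadCountState.step

theorem run_done : headCount.Run .done ![[], [], []] .done := by
  have hnil : (![[], [], []] : Fin 3 → List (Option Bool)) = fun _ => [] := by
    funext i; fin_cases i <;> rfl
  exact hnil ▸ .nil _

theorem run_close_iff (b : Bool) (w : List Bool) :
    headCount.Run (.close b) ![[], [], w.map some ++ [none]] .done ↔ w = [] := by
  cases w with
  | nil =>
    refine (run_iff_of_step_eq_some rfl rfl).trans ?_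
    simpa using run_done
  | cons a w =>
    exact iff_of_false (not_run_of_step_eq_none rfl rfl) (by simp)

theorem run_count_iff (b : Bool) (v w : List Bool) :
    headCount.Run (.count b) ![[], v.map some ++ [none], w.map some ++ [none]] .done ↔
      w = List.replicate (v.count b) true := by
  induction v generalizing w with
  | nil =>
    refine (run_iff_of_step_eq_some rfl rfl).trans ?_
    simpa using run_close_iff b w
  | cons a v ih =>
    by_cases hab : a = b
    · subst hab
      refine (run_iff_of_step_eq_some (t := HeadCountState.check a) rfl (by simp)).trans ?_
      rcases w with _ | ⟨_ | _, w⟩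
      · exact iff_of_false (not_run_of_step_eq_none rfl rfl) (by simp)
      · exact iff_of_false (not_run_of_step_eq_none rfl rfl) (by simp [List.replicate_succ])
      · refine (run_iff_of_step_eq_some rfl rfl).trans ?_
        simpa [List.replicate_succ] using ih w
    · refine (run_iff_of_step_eq_some (t := HeadCountState.count b) rfl (by simp [hab])).trans ?_
      simpa [List.count_cons, hab] using ih w

theorem run_free₂ (w : List Bool) :
    headCount.Run .free₂ ![[], [], w.map some ++ [none]] .done := by
  induction w with
  | nil => exact (run_iff_of_step_eq_some rfl rfl).2 (by simpa using run_done)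
  | cons a w ih => exact (run_iff_of_step_eq_some rfl rfl).2 (by simpa using ih)

theorem run_free₁ (v w : List Bool) :
    headCount.Run .free₁ ![[], v.map some ++ [none], w.map some ++ [none]] .done := by
  induction v with
  | nil => exact (run_iff_of_step_eq_some rfl rfl).2 (by simpa using run_free₂ w)
  | cons a v ih => exact (run_iff_of_step_eq_some rfl rfl).2 (by simpa using ih)

theorem run_skip_iff (b : Bool) (u : List Bool) (y z : List (Option Bool)) :
    headCount.Run (.skip b) ![u.map some ++ [none], y, z] .done ↔
      headCount.Run (.count b) ![[], y, z] .done := by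
  induction u with
  | nil => exact (run_iff_of_step_eq_some rfl rfl).trans (by simp)
  | cons a u ih => exact (run_iff_of_step_eq_some rfl rfl).trans (by simpa using ih)

theorem accepts_iff (t : Fin 3 → List Bool) : headCount.Accepts t ↔ t ∈ headCountLang := by
  have ht : (fun i => (t i).map some ++ [none]) =
      ![(t 0).map some ++ [none], (t 1).map some ++ [none], (t 2).map some ++ [none]] := by
    funext i; fin_cases i <;> rfl
  rw [Accepts, ht]
  change (∃ f ∈ ({.done} : Set HeadCountState), _) ↔ _
  refine exists_eq_left.trans ?_
  simp only [headCountLang, Set.mem_ofPred_eq]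
  rcases t 0 with _ | ⟨b, u⟩
  · refine iff_of_true ((run_iff_of_step_eq_some rfl rfl).2 ?_) (by simp)
    simpa using run_free₁ (t 1) (t 2)
  · refine (run_iff_of_step_eq_some rfl rfl).trans ?_
    simpa [run_skip_iff] using run_count_iff b (t 1) (t 2)

end headCount

theorem isQuasiRegular_headCountLang : IsQuasiRegular headCountLang :=
  ⟨headCount, fun t => (headCount.accepts_iff t).symm⟩

def balancedPairs : Set (Fin 2 → List Bool) :=
  {p | ∀ b, p 1 = List.replicate ((p 0).count b) true}

theorem setOf_forall_cons_mem_headCountLang :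
    {v : Fin 2 → List Bool | ∀ u, Fin.cons u v ∈ headCountLang} = balancedPairs := by
  ext v
  simp only [headCountLang, balancedPairs, Set.mem_ofPred_eq]
  refine ⟨fun h b => h [b] b rfl, fun h u b _ => h b⟩

theorem not_isWeaklyRegular_balancedPairs : ¬ IsWeaklyRegular balancedPairs := by
  intro h
  obtain ⟨K, hK⟩ := h.exists_pump_down
  let w : Fin 2 → List Bool :=
    ![List.replicate K true ++ List.replicate K false, List.replicate K true]
  have hw : w ∈ balancedPairs := by intro b; cases b <;> simp [w, List.count_replicate]
  obtain ⟨α, β, γ, hsplit, hlen, ⟨i, hi⟩, hmem⟩ := hK w hw (by intro i; fin_cases i <;> simp [w])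
  have hprefix : α 0 ++ β 0 <+: List.replicate K true :=
    List.prefix_of_prefix_length_le ⟨γ 0, (hsplit 0).symm⟩ (List.prefix_append _ _)
      (by simpa using hlen 0)
  have hfalse : false ∉ α 0 ++ β 0 := fun hx => by
    simpa using List.eq_of_mem_replicate (hprefix.subset hx)
  have hαF : (α 0).count false = 0 := List.count_eq_zero.2 fun hx => hfalse (by simp [hx])
  have hβF : (β 0).count false = 0 := List.count_eq_zero.2 fun hx => hfalse (by simp [hx])
  have hβ := List.count_true_add_count_false (β 0)
  have hT : K = (α 0).count true + ((β 0).count true + (γ 0).count true) := by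
    simpa [w, List.count_replicate] using congrArg (List.count true) (hsplit 0)
  have hF : K = (α 0).count false + ((β 0).count false + (γ 0).count false) := by
    simpa [w, List.count_replicate] using congrArg (List.count false) (hsplit 0)
  have hL : K = (α 1).length + ((β 1).length + (γ 1).length) := by
    simpa [w] using congrArg List.length (hsplit 1)
  have hmT : (α 1).length + (γ 1).length = (α 0).count true + (γ 0).count true := by
    simpa using congrArg List.length (hmem true)
  have hmF : (α 1).length + (γ 1).length = (α 0).count false + (γ 0).count false := by
    simpa using congrArg List.length (hmem false)
  have hβ₀ : β 0 = [] := List.length_eq_zero_iff.1 (by omega)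
  have hβ₁ : β 1 = [] := List.length_eq_zero_iff.1 (by omega)
  fin_cases i
  exacts [hi hβ₀, hi hβ₁]

/-- Universal quantification over a coordinate does not preserve weak regularity:
there are a finite alphabet `A` and a quasi-regular (hence weakly regular)
three-variable language `L` over `A` such that
`{(v, w) : ∀ u, (u, v, w) ∈ L}` is not weakly regular. -/
theorem weaklyRegular_not_closed_under_forall :
    ∃ (A : Type) (_ : Fintype A) (L : Set (Fin 3 → List A)),
      IsQuasiRegular L ∧ IsWeaklyRegular L ∧
      ¬ IsWeaklyRegular { v : Fin 2 → List A | ∀ u : List A, Fin.cons u v ∈ L } := by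
  refine ⟨Bool, inferInstance, headCountLang, isQuasiRegular_headCountLang,
    isQuasiRegular_headCountLang.isWeaklyRegular, ?_⟩
  rw [setOf_forall_cons_mem_headCountLang]
  exact not_isWeaklyRegular_balancedPairs
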